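/- Let X be a real Hilbert space, F : X → X a monotone operator, and suppose the Tikhonov-type variational source condition ⟨x† − x̄, x† − x⟩ ≤ β‖x† − x‖² + ψ(‖F(x) − F(x†)‖) holds for all x ∈ M, where β ∈ [0,1), ψ is an index function extended by ψ(0) = 0, M ⊆ X, and F(x†) = y. Let yδ ∈ X with ‖y − yδ‖ ≤ δ, δ > 0, α > 0, and let xαδ ∈ X satisfy F(xαδ) + α(xαδ − x̄) = yδ with xαδ ∈ M. Then, with c = ‖x† − x̄‖, one has ‖xαδ − x†‖² ≤ δ²/((1 − β)² α²) + (2/(1 − β)) ψ(δ + c α). -/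

import Mathlib

open RealInnerProductSpace Filter

/-!
Write `e = x_α^δ − x†` and `w = F(x_α^δ) − F(x†)`, so that the Lavrentiev equation reads
`w + α (x_α^δ − x̄) = y^δ − y`. Testing it with `w` and using `⟪w, e⟫ ≥ 0` bounds the residual,
`‖w‖ ≤ δ + ‖x† − x̄‖ α`. Testing it with `e` instead and inserting the source condition gives
`(1 − β) α ‖e‖² ≤ δ ‖e‖ + α ψ(‖w‖)`; monotonicity of `ψ` and Young's inequality for `δ ‖e‖`
finish the estimate.
-/

def IsMonotoneOperator {X : Type*} [NormedAddCommGroup X] [InnerProductSpace ℝ X]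
    (F : X → X) : Prop :=
  ∀ x x' : X, 0 ≤ ⟪F x - F x', x - x'⟫

theorem MonotoneOn.Ici_of_Ioi {ψ : ℝ → ℝ} {a : ℝ} (hψ : MonotoneOn ψ (Set.Ioi a))
    (ha : ∀ t > a, ψ a ≤ ψ t) : MonotoneOn ψ (Set.Ici a) := by
  intro s hs t ht hst
  rcases (Set.mem_Ici.mp hs).eq_or_lt with rfl | has
  · rcases hst.eq_or_lt with rfl | hat
    · exact le_rfl
    · exact ha t hat
  · exact hψ has (has.trans_le hst) hst

theorem sq_le_of_mul_sq_le_mul_add {a d b t : ℝ} (ha : 0 < a) (h : a * t ^ 2 ≤ d * t + b) :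
    t ^ 2 ≤ d ^ 2 / a ^ 2 + 2 * b / a := by
  have young : a * d * t ≤ (a ^ 2 * t ^ 2 + d ^ 2) / 2 := by nlinarith [sq_nonneg (a * t - d)]
  have hsq : a ^ 2 * t ^ 2 ≤ d ^ 2 + 2 * a * b := by nlinarith [mul_le_mul_of_nonneg_left h ha.le]
  rw [div_add_div _ _ (by positivity) ha.ne', le_div_iff₀ (by positivity)]
  nlinarith

section Lavrentiev

variable {X : Type*} [NormedAddCommGroup X] [InnerProductSpace ℝ X]
  {F : X → X} {x xbar xdag yδ : X} {α : ℝ}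

theorem IsMonotoneOperator.norm_sub_le_of_lavrentiev (hF : IsMonotoneOperator F) (hα : 0 ≤ α)
    (hlav : F x + α • (x - xbar) = yδ) :
    ‖F x - F xdag‖ ≤ ‖yδ - F xdag‖ + α * ‖xdag - xbar‖ := by
  set w := F x - F xdag
  have hw : w = (yδ - F xdag) - α • (x - xdag) - α • (xdag - xbar) := by
    rw [← hlav]; module
  have hsq : ‖w‖ ^ 2 ≤ ‖w‖ * (‖yδ - F xdag‖ + α * ‖xdag - xbar‖) :=
    calc ‖w‖ ^ 2 = ⟪w, yδ - F xdag⟫ - α * ⟪w, x - xdag⟫ - α * ⟪w, xdag - xbar⟫ := by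
          rw [← real_inner_self_eq_norm_sq]
          nth_rw 2 [hw]
          rw [inner_sub_right, inner_sub_right, real_inner_smul_right, real_inner_smul_right]
      _ ≤ ‖w‖ * (‖yδ - F xdag‖ + α * ‖xdag - xbar‖) := by
          have hdata := real_inner_le_norm w (yδ - F xdag)
          have hbias := neg_le_of_abs_le (abs_real_inner_le_norm w (xdag - xbar))
          nlinarith [mul_nonneg hα (hF x xdag), mul_le_mul_of_nonneg_left hbias hα]
  nlinarith [norm_nonneg w, norm_nonneg (yδ - F xdag), norm_nonneg (xdag - xbar),
    mul_nonneg hα (norm_nonneg (xdag - xbar))]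

theorem IsMonotoneOperator.mul_sub_inner_le_of_lavrentiev (hF : IsMonotoneOperator F)
    (hlav : F x + α • (x - xbar) = yδ) :
    α * (‖x - xdag‖ ^ 2 - ⟪xdag - xbar, xdag - x⟫) ≤ ‖yδ - F xdag‖ * ‖x - xdag‖ := by
  have hsplit : yδ - F xdag = (F x - F xdag) + α • (x - xdag) + α • (xdag - xbar) := by
    rw [← hlav]; module
  have hflip : ⟪xdag - xbar, xdag - x⟫ = -⟪xdag - xbar, x - xdag⟫ := by
    rw [← inner_neg_right, neg_sub]
  calc α * (‖x - xdag‖ ^ 2 - ⟪xdag - xbar, xdag - x⟫)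
      ≤ ⟪F x - F xdag, x - xdag⟫ + α * (‖x - xdag‖ ^ 2 + ⟪xdag - xbar, x - xdag⟫) := by
        rw [hflip, sub_neg_eq_add]; linarith [hF x xdag]
    _ = ⟪yδ - F xdag, x - xdag⟫ := by
        rw [hsplit, inner_add_left, inner_add_left, real_inner_smul_left, real_inner_smul_left,
          real_inner_self_eq_norm_sq]
        ring
    _ ≤ ‖yδ - F xdag‖ * ‖x - xdag‖ := real_inner_le_norm _ _

end Lavrentiev

theorem stmt_9_general {X : Type*} [NormedAddCommGroup X] [InnerProductSpace ℝ X]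
    (F : X → X) (hmono : ∀ x x' : X, 0 ≤ ⟪F x - F x', x - x'⟫)
    (y xbar xdag : X) (hsol : F xdag = y)
    (β : ℝ) (hβ1 : β < 1)
    (ψ : ℝ → ℝ) (hψmono : StrictMonoOn ψ (Set.Ioi 0)) (hψpos : ∀ t > (0:ℝ), 0 < ψ t)
    (hψzero : ψ 0 = 0)
    (M : Set X)
    (hvsc : ∀ x ∈ M,
      ⟪xdag - xbar, xdag - x⟫ ≤ β * ‖xdag - x‖ ^ 2 + ψ ‖F x - F xdag‖)
    (δ α : ℝ) (hα : 0 < α) (yδ : X) (hnoise : ‖y - yδ‖ ≤ δ)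
    (xad : X) (hxadM : xad ∈ M) (hlav : F xad + α • (xad - xbar) = yδ) :
    ‖xad - xdag‖ ^ 2 ≤
      δ ^ 2 / ((1 - β) ^ 2 * α ^ 2) + (2 / (1 - β)) * ψ (δ + ‖xdag - xbar‖ * α) := by
  subst hsol
  have hF : IsMonotoneOperator F := hmono
  have hnoise' : ‖yδ - F xdag‖ ≤ δ := by rwa [norm_sub_rev]
  have hψ : MonotoneOn ψ (Set.Ici 0) :=
    hψmono.monotoneOn.Ici_of_Ioi fun t ht => by rw [hψzero]; exact (hψpos t ht).le
  have hres : ‖F xad - F xdag‖ ≤ δ + ‖xdag - xbar‖ * α := by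
    linarith [hF.norm_sub_le_of_lavrentiev (xdag := xdag) hα.le hlav]
  have hψres : ψ ‖F xad - F xdag‖ ≤ ψ (δ + ‖xdag - xbar‖ * α) :=
    hψ (norm_nonneg _) ((norm_nonneg _).trans hres) hres
  have hsrc := hvsc xad hxadM
  rw [norm_sub_rev xdag] at hsrc
  have herr : (1 - β) * α * ‖xad - xdag‖ ^ 2 ≤
      δ * ‖xad - xdag‖ + α * ψ (δ + ‖xdag - xbar‖ * α) := by
    linarith [hF.mul_sub_inner_le_of_lavrentiev (xdag := xdag) hlav,
      mul_le_mul_of_nonneg_right hnoise' (norm_nonneg (xad - xdag)),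
      mul_le_mul_of_nonneg_left hsrc hα.le, mul_le_mul_of_nonneg_left hψres hα.le]
  have hα1β : 0 < (1 - β) * α := mul_pos (sub_pos.mpr hβ1) hα
  convert sq_le_of_mul_sq_le_mul_add hα1β herr using 2
  · ring
  · field_simp

/-- Error estimate for Lavrentiev regularization under the Tikhonov-type variational
source condition (Theorem 3.1, estimate (estim1)):
‖x_α^δ − x†‖² ≤ δ²/((1−β)²α²) + (2/(1−β)) ψ(δ + ‖x†−x̄‖ α). -/
theorem stmt_9 {X : Type*} [NormedAddCommGroup X] [InnerProductSpace ℝ X] [CompleteSpace X]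
    (F : X → X) (hmono : ∀ x x' : X, 0 ≤ ⟪F x - F x', x - x'⟫)
    (y xbar xdag : X) (hsol : F xdag = y)
    (β : ℝ) (hβ0 : 0 ≤ β) (hβ1 : β < 1)
    (ψ : ℝ → ℝ) (hψcont : ContinuousOn ψ (Set.Ioi 0))
    (hψmono : StrictMonoOn ψ (Set.Ioi 0)) (hψpos : ∀ t > (0:ℝ), 0 < ψ t)
    (hψ0 : Tendsto ψ (nhdsWithin 0 (Set.Ioi 0)) (nhds 0)) (hψzero : ψ 0 = 0)
    (M : Set X)
    (hvsc : ∀ x ∈ M,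
      ⟪xdag - xbar, xdag - x⟫ ≤ β * ‖xdag - x‖ ^ 2 + ψ ‖F x - F xdag‖)
    (δ α : ℝ) (hδ : 0 < δ) (hα : 0 < α) (yδ : X) (hnoise : ‖y - yδ‖ ≤ δ)
    (xad : X) (hxadM : xad ∈ M) (hlav : F xad + α • (xad - xbar) = yδ) :
    ‖xad - xdag‖ ^ 2 ≤
      δ ^ 2 / ((1 - β) ^ 2 * α ^ 2) + (2 / (1 - β)) * ψ (δ + ‖xdag - xbar‖ * α) :=
  stmt_9_general F hmono y xbar xdag hsol β hβ1 ψ hψmono hψpos hψzero M hvsc δ α hα yδ hnoise xad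
    hxadM hlav
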